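/- arXiv:1605.09541 — 5 statements merged into one kernel-verified Lean document; each statement's English description precedes it below -/
import Mathlib

section
/- For every odd positive integer m, Σ_{n=1}^{∞} (ζ(2n)/(n·4^n)) · C(2n, m) = 1/m, where C(2n, m) denotes the binomial coefficient. -/
open Real

/-- Real Riemann zeta values via the series `∑ 1/k^m`. -/
noncomputable def zetaR (m : ℕ) : ℝ := ∑' k : ℕ, 1 / ((k : ℝ) + 1) ^ m

/-!
Expanding `ζ(2n) / 4^n = ∑_{k ≥ 1} (2k)^{-2n}` turns the series into a double series of
nonnegative terms, which may be summed over `n` first. Since `C(2n, m) / n = (2/m) C(2n-1, m-1)`,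
the inner sum is the odd part of the generating function `∑_j C(j, m-1) y^(j+1) = (y/(1-y))^m`
at `y = 1/(2k)`, namely `((2k-1)^{-m} - (2k+1)^{-m}) / m`, and these telescope to `1/m`.
-/

open Filter Topology

theorem HasSum.swap_of_nonneg {α β : Type*} {f : α → β → ℝ} {r : α → ℝ} {s : β → ℝ} {c : ℝ}
    (hc : HasSum r c) (hf : ∀ a b, 0 ≤ f a b) (hr : ∀ a, HasSum (f a) (r a))
    (hs : ∀ b, HasSum (fun a ↦ f a b) (s b)) : HasSum s c := by
  obtain ⟨σ, hσ⟩ : Summable (Function.uncurry f) :=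
    (summable_prod_of_nonneg fun p ↦ hf p.1 p.2).2
      ⟨fun a ↦ (hr a).summable, hc.summable.congr fun a ↦ (hr a).tsum_eq.symm⟩
  obtain rfl : c = σ := hc.unique (hσ.prod_fiberwise hr)
  exact ((Equiv.prodComm β α).hasSum_iff.2 hσ).prod_fiberwise hs

theorem Antitone.hasSum_sub_succ {f : ℕ → ℝ} {l : ℝ} (hf : Antitone f)
    (hl : Tendsto f atTop (𝓝 l)) : HasSum (fun n ↦ f n - f (n + 1)) (f 0 - l) := by
  rw [hasSum_iff_tendsto_nat_of_nonneg fun n ↦ sub_nonneg.2 (hf n.le_succ)]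
  simpa only [Finset.sum_range_sub'] using tendsto_const_nhds.sub hl

theorem HasSum.odd_of_neg_one_pow_mul {𝕜 : Type*} [Field 𝕜] [CharZero 𝕜] [TopologicalSpace 𝕜]
    [IsTopologicalRing 𝕜] {f : ℕ → 𝕜} {a b : 𝕜} (ha : HasSum f a)
    (hb : HasSum (fun n ↦ (-1) ^ n * f n) b) : HasSum (fun n ↦ f (2 * n + 1)) ((a - b) / 2) := by
  have hinj : Function.Injective fun n : ℕ ↦ 2 * n + 1 := fun m n h ↦ by simp_all
  have hvanish : ∀ n ∉ Set.range fun n : ℕ ↦ 2 * n + 1, (f n - (-1) ^ n * f n) / 2 = 0 := by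
    intro n hn
    have heven : Even n := by
      rw [← Nat.not_odd_iff_even]
      rintro ⟨k, rfl⟩
      exact hn ⟨k, rfl⟩
    simp [heven.neg_one_pow]
  convert (hinj.hasSum_iff hvanish).2 ((ha.sub hb).div_const 2) using 2 with n
  simp [(odd_two_mul_add_one n).neg_one_pow]

section GeneratingFunction

variable {𝕜 : Type*} [NormedField 𝕜]

theorem hasSum_choose_mul_pow_succ (k : ℕ) {y : 𝕜} (hy : ‖y‖ < 1) :
    HasSum (fun n ↦ (n.choose k : 𝕜) * y ^ (n + 1)) ((y / (1 - y)) ^ (k + 1)) := by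
  have hlow : ∑ i ∈ Finset.range k, (i.choose k : 𝕜) * y ^ (i + 1) = 0 :=
    Finset.sum_eq_zero fun i hi ↦ by
      simp [Nat.choose_eq_zero_of_lt (Finset.mem_range.1 hi)]
  rw [← hasSum_nat_add_iff' k, hlow, sub_zero, div_pow, div_eq_mul_one_div]
  exact ((hasSum_choose_mul_geometric_of_norm_lt_one k hy).mul_left (y ^ (k + 1))).congr_fun
    fun n ↦ by ring

variable [CharZero 𝕜]

theorem hasSum_choose_even_mul_pow (t : ℕ) {y : 𝕜} (hy : ‖y‖ < 1) :
    HasSum (fun n ↦ ((2 * n + 1).choose (2 * t) : 𝕜) * y ^ (2 * n + 2))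
      (((y / (1 - y)) ^ (2 * t + 1) - (y / (1 + y)) ^ (2 * t + 1)) / 2) := by
  have hneg := (hasSum_choose_mul_pow_succ (2 * t) (y := -y) (by rwa [norm_neg])).neg
  rw [sub_neg_eq_add, neg_div, (odd_two_mul_add_one t).neg_pow, neg_neg] at hneg
  refine (hasSum_choose_mul_pow_succ (2 * t) hy).odd_of_neg_one_pow_mul
    (hneg.congr_fun fun n ↦ ?_)
  rw [neg_pow y, pow_succ (-1 : 𝕜)]
  ring

theorem hasSum_choose_odd_div_mul_pow (t : ℕ) {y : 𝕜} (hy : ‖y‖ < 1) :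
    HasSum (fun n : ℕ ↦ ((2 * (n + 1)).choose (2 * t + 1) : 𝕜) / ((n : 𝕜) + 1) * y ^ (2 * (n + 1)))
      (((y / (1 - y)) ^ (2 * t + 1) - (y / (1 + y)) ^ (2 * t + 1)) / (2 * t + 1)) := by
  have hm : (2 * t + 1 : 𝕜) ≠ 0 := by exact_mod_cast (2 * t).succ_ne_zero
  rw [show ∀ a : 𝕜, a / (2 * t + 1) = 2 / (2 * t + 1) * (a / 2) from fun a ↦ by field_simp]
  refine ((hasSum_choose_even_mul_pow t hy).mul_left (2 / (2 * t + 1) : 𝕜)).congr_fun fun n ↦ ?_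
  have hchoose : ((2 * (n + 1)).choose (2 * t + 1) : 𝕜) * (2 * t + 1) =
      (2 * (n + 1)) * (2 * n + 1).choose (2 * t) := by
    exact_mod_cast (Nat.add_one_mul_choose_eq (2 * n + 1) (2 * t)).symm
  field_simp
  linear_combination y ^ (2 * n + 2) * hchoose

end GeneratingFunction

theorem hasSum_choose_odd_div_mul_one_div_two_mul_pow (t k : ℕ) :
    HasSum (fun n : ℕ ↦ ((2 * (n + 1)).choose (2 * t + 1) : ℝ) / ((n : ℝ) + 1) *
      (1 / (2 * ((k : ℝ) + 1))) ^ (2 * (n + 1)))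
      (((1 / (2 * (k : ℝ) + 1)) ^ (2 * t + 1) - (1 / (2 * ((k + 1 : ℕ) : ℝ) + 1)) ^ (2 * t + 1)) /
        (2 * t + 1)) := by
  have hy : ‖1 / (2 * ((k : ℝ) + 1))‖ < 1 := by
    rw [Real.norm_of_nonneg (by positivity), div_lt_one (by positivity)]
    linarith [k.cast_nonneg (α := ℝ)]
  have hminus : 1 / (2 * ((k : ℝ) + 1)) / (1 - 1 / (2 * ((k : ℝ) + 1))) = 1 / (2 * k + 1) := by
    rw [one_sub_div (by positivity), show 2 * ((k : ℝ) + 1) - 1 = 2 * k + 1 by ring]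
    field_simp
  have hplus : 1 / (2 * ((k : ℝ) + 1)) / (1 + 1 / (2 * ((k : ℝ) + 1))) =
      1 / (2 * ((k + 1 : ℕ) : ℝ) + 1) := by
    push_cast
    field_simp
  simpa only [hminus, hplus] using hasSum_choose_odd_div_mul_pow t hy

theorem hasSum_one_div_two_mul_add_one_pow_sub {m : ℕ} (hm : m ≠ 0) :
    HasSum (fun k : ℕ ↦ (1 / (2 * (k : ℝ) + 1)) ^ m - (1 / (2 * ((k + 1 : ℕ) : ℝ) + 1)) ^ m) 1 := by
  have hanti : Antitone fun k : ℕ ↦ (1 / (2 * (k : ℝ) + 1)) ^ m := fun a b hab ↦ by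
    dsimp only
    gcongr
  have hlim : Tendsto (fun k : ℕ ↦ 1 / (2 * (k : ℝ) + 1)) atTop (𝓝 0) := by
    simpa only [Function.comp_def, one_div] using tendsto_inv_atTop_zero.comp
      ((tendsto_natCast_atTop_atTop.const_mul_atTop two_pos).atTop_add tendsto_const_nhds)
  simpa [zero_pow hm] using hanti.hasSum_sub_succ (hlim.pow m)

theorem hasSum_zetaR {p : ℕ} (hp : 1 < p) :
    HasSum (fun k : ℕ ↦ 1 / ((k : ℝ) + 1) ^ p) (zetaR p) := by
  have := (summable_nat_add_iff 1).2 (Real.summable_one_div_nat_pow.2 hp)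
  push_cast at this
  exact this.hasSum

theorem hasSum_one_div_two_mul_pow {p : ℕ} (hp : 1 < p) :
    HasSum (fun k : ℕ ↦ (1 / (2 * ((k : ℝ) + 1))) ^ p) (zetaR p / 2 ^ p) := by
  rw [div_eq_mul_one_div (zetaR p), mul_comm]
  exact ((hasSum_zetaR hp).mul_left (1 / 2 ^ p)).congr_fun fun k ↦ by
    rw [div_pow, one_pow, mul_pow, one_div_mul_one_div]

theorem zeta_binom_four_odd_general (m : ℕ) (hm : Odd m) :
    ∑' n : ℕ, zetaR (2 * (n + 1)) / (((n : ℝ) + 1) * 4 ^ (n + 1)) *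
      (Nat.choose (2 * (n + 1)) m : ℝ) = 1 / (m : ℝ) := by
  obtain ⟨t, rfl⟩ := hm
  have htel := (hasSum_one_div_two_mul_add_one_pow_sub (m := 2 * t + 1) (by omega)).div_const
    (2 * t + 1 : ℝ)
  have hrow (n : ℕ) := (hasSum_one_div_two_mul_pow (p := 2 * (n + 1)) (by omega)).mul_left
    (((2 * (n + 1)).choose (2 * t + 1) : ℝ) / ((n : ℝ) + 1))
  have hsum := htel.swap_of_nonneg (fun k n ↦ by positivity)
    (hasSum_choose_odd_div_mul_one_div_two_mul_pow t) hrow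
  push_cast
  convert hsum.tsum_eq using 2
  funext n
  rw [pow_mul, show (2 : ℝ) ^ 2 = 4 by norm_num]
  field_simp

theorem zeta_binom_four_odd (m : ℕ) (hm : Odd m) (hm0 : 0 < m) :
    ∑' n : ℕ, zetaR (2 * (n + 1)) / (((n : ℝ) + 1) * 4 ^ (n + 1)) *
      (Nat.choose (2 * (n + 1)) m : ℝ) = 1 / (m : ℝ) :=
  zeta_binom_four_odd_general m hm
end

section
/- Σ_{n=1}^{∞} ζ(2n)·(2n−1)/4^n = π²/8 − 1/2. -/
/-!
Writing `ζ(2n) / 4ⁿ = ∑ₘ xₘⁿ` with `xₘ = 1 / (2m)²` and swapping the two sums (all terms are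
nonnegative) turns the series into `∑ₘ ∑ₙ (2n - 1) xₘⁿ`. The inner sum is
`x(1 + x)/(1 - x)² = (4m² + 1)/(4m² - 1)²`, the average of `1/(2m - 1)²` and `1/(2m + 1)²`.
Summing over `m` counts every odd reciprocal square twice except `1/1²`, which gives
`(2 · π²/8 - 1) / 2`.
-/

open Real

theorem hasSum_odd_mul_geometric {𝕜 : Type*} [NormedField 𝕜] [CompleteSpace 𝕜] {x : 𝕜}
    (hx : ‖x‖ < 1) :
    HasSum (fun n : ℕ => (2 * n + 1) * x ^ (n + 1)) (x * (1 + x) / (1 - x) ^ 2) := by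
  have hx_sub : 1 - x ≠ 0 := sub_ne_zero.2 (by rintro rfl; simp at hx)
  have h := (((hasSum_coe_mul_geometric_of_norm_lt_one hx).mul_left 2).add
    (hasSum_geometric_of_norm_lt_one hx)).mul_left x
  rw [show x * (1 + x) / (1 - x) ^ 2 = x * (2 * (x / (1 - x) ^ 2) + (1 - x)⁻¹) by
    field_simp; ring]
  exact h.congr_fun fun n => by ring

theorem hasSum_tsum_comm_of_nonneg {β γ : Type*} {f : β → γ → ℝ} (hf : ∀ b c, 0 ≤ f b c)
    {g : β → ℝ} {a : ℝ} (hfg : ∀ b, HasSum (f b) (g b)) (hg : HasSum g a) :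
    HasSum (fun c => ∑' b, f b c) a := by
  have hsum : Summable (Function.uncurry f) :=
    (summable_prod_of_nonneg fun p => hf p.1 p.2).2
      ⟨fun b => (hfg b).summable, by simpa only [(hfg _).tsum_eq] using hg.summable⟩
  have hswap := ((summable_prod_of_nonneg fun p => hf p.2 p.1).1 hsum.prod_symm).2
  rw [← hg.tsum_eq, ← tsum_congr fun b => (hfg b).tsum_eq, ← hsum.tsum_comm]
  exact hswap.hasSum

theorem hasSum_one_div_odd_sq :
    HasSum (fun k : ℕ => 1 / (2 * (k : ℝ) + 1) ^ 2) (π ^ 2 / 8) := by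
  have hodd : Summable (fun k : ℕ => 1 / ((2 * k + 1 : ℕ) : ℝ) ^ 2) :=
    hasSum_zeta_two.summable.comp_injective (fun a b h => by omega)
  have heven : HasSum (fun k : ℕ => 1 / ((2 * k : ℕ) : ℝ) ^ 2) (1 / 4 * (π ^ 2 / 6)) :=
    (hasSum_zeta_two.mul_left (1 / 4)).congr_fun fun k => by push_cast; ring
  have hvalue := (heven.even_add_odd (f := fun n : ℕ => 1 / (n : ℝ) ^ 2) hodd.hasSum).unique
    hasSum_zeta_two
  convert hodd.hasSum using 1
  · ext k; push_cast; rfl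
  · linarith

theorem hasSum_half_add_consecutive_odd_sq :
    HasSum (fun k : ℕ => (1 / (2 * (k : ℝ) + 1) ^ 2 + 1 / (2 * (k : ℝ) + 3) ^ 2) / 2)
      (π ^ 2 / 8 - 1 / 2) := by
  have hshift := (hasSum_nat_add_iff' 1).2 hasSum_one_div_odd_sq
  norm_num at hshift
  rw [show π ^ 2 / 8 - 1 / 2 = (π ^ 2 / 8 + (π ^ 2 / 8 - 1)) / 2 by ring]
  exact ((hasSum_one_div_odd_sq.add hshift).div_const 2).congr_fun fun k => by ring

theorem hasSum_odd_mul_inv_even_sq_pow (k : ℕ) :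
    HasSum (fun n : ℕ => (2 * n + 1) * (1 / (2 * (k : ℝ) + 2) ^ 2) ^ (n + 1))
      ((1 / (2 * (k : ℝ) + 1) ^ 2 + 1 / (2 * (k : ℝ) + 3) ^ 2) / 2) := by
  set x : ℝ := 1 / (2 * (k : ℝ) + 2) ^ 2 with hx_def
  have hx : ‖x‖ < 1 := by
    rw [norm_of_nonneg (by positivity), div_lt_one (by positivity)]
    nlinarith [k.cast_nonneg (α := ℝ)]
  have hx_sub : 1 - x = (2 * (k : ℝ) + 1) * (2 * k + 3) / (2 * k + 2) ^ 2 := by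
    rw [hx_def]; field_simp; ring
  rw [show (1 / (2 * (k : ℝ) + 1) ^ 2 + 1 / (2 * (k : ℝ) + 3) ^ 2) / 2 =
      x * (1 + x) / (1 - x) ^ 2 by rw [hx_sub, hx_def]; field_simp; ring]
  exact hasSum_odd_mul_geometric hx

theorem zetaR_two_mul_div_four_pow (m : ℕ) :
    zetaR (2 * m) / 4 ^ m = ∑' k : ℕ, (1 / (2 * (k : ℝ) + 2) ^ 2) ^ m := by
  rw [zetaR, ← tsum_div_const]
  congr 1 with k
  rw [div_div, pow_mul, ← mul_pow]
  ring

theorem zeta_series_four_linear :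
    ∑' n : ℕ, zetaR (2 * (n + 1)) * (2 * ((n : ℝ) + 1) - 1) / 4 ^ (n + 1) =
      π ^ 2 / 8 - 1 / 2 := by
  have hswap := hasSum_tsum_comm_of_nonneg (fun k n => by positivity)
    hasSum_odd_mul_inv_even_sq_pow hasSum_half_add_consecutive_odd_sq
  refine (hswap.congr_fun fun n => ?_).tsum_eq
  rw [mul_div_right_comm, zetaR_two_mul_div_four_pow, ← tsum_mul_right]
  congr 1 with k
  ring
end

section
/- Σ_{n=1}^{∞} ζ(2n)·n/4^n = π²/16. -/
/-!
Expanding `ζ(2n) = ∑ₖ 1/(k+1)^(2n)` and swapping the nonnegative double series, the inner sum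
is `∑ₙ n rⁿ = r/(1-r)²` with `r = 1/(4(k+1)²)`. With `a = 1/(2k+1)` and `b = 1/(2k+3)` this is
`((a+b)/2)² = (a² + b²)/4 + (a - b)/4`, because `2ab = a - b`. Summed over `k`, the squares of
the odd reciprocals give `π²/8 + (π²/8 - 1)` and the differences telescope to `1`.
-/

open Real

open Filter Topology

theorem hasSum_succ_mul_geometric {𝕜 : Type*} [NormedDivisionRing 𝕜] {r : 𝕜} (hr : ‖r‖ < 1) :
    HasSum (fun n : ℕ => ((n : 𝕜) + 1) * r ^ (n + 1)) (r / (1 - r) ^ 2) := by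
  simpa using (hasSum_nat_add_iff' (f := fun n : ℕ => (n : 𝕜) * r ^ n) 1).2
    (hasSum_coe_mul_geometric_of_norm_lt_one hr)

theorem hasSum_sub_succ_of_antitone {f : ℕ → ℝ} (hf : Antitone f)
    (hlim : Tendsto f atTop (𝓝 0)) : HasSum (fun n => f n - f (n + 1)) (f 0) := by
  rw [hasSum_iff_tendsto_nat_of_nonneg fun n => sub_nonneg.2 (hf n.le_succ)]
  simp_rw [Finset.sum_range_sub']
  simpa using tendsto_const_nhds.sub hlim

theorem zetaR_two_mul_div_pow (m : ℕ) (c : ℝ) :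
    zetaR (2 * m) / c ^ m = ∑' k : ℕ, (1 / (c * ((k : ℝ) + 1) ^ 2)) ^ m := by
  rw [zetaR, ← tsum_div_const]
  congr 1 with k
  rw [pow_mul, div_pow, one_pow, div_div, mul_pow, mul_comm]

noncomputable def oddRecip (k : ℕ) : ℝ := 1 / (2 * k + 1)

theorem hasSum_oddRecip_sq : HasSum (fun k => oddRecip k ^ 2) (π ^ 2 / 8) := by
  have hodd : Summable (fun k => oddRecip k ^ 2) :=
    (hasSum_zeta_two.summable.comp_injective (i := fun k : ℕ => 2 * k + 1)
      fun a b h => by simp only at h; omega).congr fun k => by simp [oddRecip]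
  have heven : HasSum (fun k : ℕ => 1 / ((2 * k : ℕ) : ℝ) ^ 2) (π ^ 2 / 6 / 4) :=
    (hasSum_zeta_two.div_const 4).congr_fun fun k => by push_cast; ring
  have hsplit := hasSum_zeta_two.unique <| heven.even_add_odd (f := fun n : ℕ => 1 / (n : ℝ) ^ 2)
    (hodd.hasSum.congr_fun fun k => by simp [oddRecip])
  rw [show π ^ 2 / 8 = ∑' k, oddRecip k ^ 2 by linarith]
  exact hodd.hasSum

theorem hasSum_oddRecip_succ_sq : HasSum (fun k => oddRecip (k + 1) ^ 2) (π ^ 2 / 8 - 1) := by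
  simpa [oddRecip] using (hasSum_nat_add_iff' (f := fun k => oddRecip k ^ 2) 1).2 hasSum_oddRecip_sq

theorem hasSum_oddRecip_sub_succ : HasSum (fun k => oddRecip k - oddRecip (k + 1)) 1 := by
  have hanti : Antitone oddRecip := fun a b hab => by
    unfold oddRecip
    gcongr
  have hlim : Tendsto oddRecip atTop (𝓝 0) := by
    have := ((tendsto_natCast_atTop_atTop (R := ℝ)).const_mul_atTop two_pos).atTop_add
      (tendsto_const_nhds (x := (1 : ℝ)))
    exact this.inv_tendsto_atTop.congr fun k => (one_div _).symm
  simpa [oddRecip] using hasSum_sub_succ_of_antitone hanti hlim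

theorem hasSum_succ_mul_pow_div_four_mul_sq (k : ℕ) :
    HasSum (fun n : ℕ => ((n : ℝ) + 1) * (1 / (4 * ((k : ℝ) + 1) ^ 2)) ^ (n + 1))
      ((oddRecip k ^ 2 + oddRecip (k + 1) ^ 2 + (oddRecip k - oddRecip (k + 1))) / 4) := by
  have hr : ‖1 / (4 * ((k : ℝ) + 1) ^ 2)‖ < 1 := by
    rw [Real.norm_of_nonneg (by positivity), div_lt_one (by positivity)]
    nlinarith [k.cast_nonneg (α := ℝ)]
  have hsub : 1 - 1 / (4 * ((k : ℝ) + 1) ^ 2) =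
      (2 * k + 1) * (2 * k + 3) / (4 * ((k : ℝ) + 1) ^ 2) := by
    field_simp
    ring
  have hvalue : (oddRecip k ^ 2 + oddRecip (k + 1) ^ 2 + (oddRecip k - oddRecip (k + 1))) / 4 =
      1 / (4 * ((k : ℝ) + 1) ^ 2) / (1 - 1 / (4 * ((k : ℝ) + 1) ^ 2)) ^ 2 := by
    rw [hsub, oddRecip, oddRecip]
    push_cast
    field_simp
    ring
  rw [hvalue]
  exact hasSum_succ_mul_geometric hr

theorem zeta_series_four_n :
    ∑' n : ℕ, zetaR (2 * (n + 1)) * ((n : ℝ) + 1) / 4 ^ (n + 1) = π ^ 2 / 16 := by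
  let F : ℕ → ℕ → ℝ := fun k n => ((n : ℝ) + 1) * (1 / (4 * ((k : ℝ) + 1) ^ 2)) ^ (n + 1)
  have hinner := hasSum_succ_mul_pow_div_four_mul_sq
  have houter : HasSum (fun k => (oddRecip k ^ 2 + oddRecip (k + 1) ^ 2 +
      (oddRecip k - oddRecip (k + 1))) / 4) (π ^ 2 / 16) := by
    have h := ((hasSum_oddRecip_sq.add hasSum_oddRecip_succ_sq).add
      hasSum_oddRecip_sub_succ).div_const 4
    rwa [show (π ^ 2 / 8 + (π ^ 2 / 8 - 1) + 1) / 4 = π ^ 2 / 16 by ring] at h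
  have hF : Summable (Function.uncurry F) :=
    (summable_prod_of_nonneg fun p => by
      simp only [Pi.zero_apply, Function.uncurry, F]; positivity).2
      ⟨fun k => (hinner k).summable, houter.summable.congr fun k => (hinner k).tsum_eq.symm⟩
  calc ∑' n : ℕ, zetaR (2 * (n + 1)) * ((n : ℝ) + 1) / 4 ^ (n + 1)
      = ∑' n, ∑' k, F k n := tsum_congr fun n => by
        rw [mul_div_right_comm, zetaR_two_mul_div_pow, mul_comm, ← tsum_mul_left]
    _ = ∑' k, ∑' n, F k n := hF.tsum_comm
    _ = π ^ 2 / 16 := by rw [tsum_congr fun k => (hinner k).tsum_eq, houter.tsum_eq]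
end

section
/- Σ_{n=1}^{∞} ζ(2n)/(n·16^n) = log(π/(2√2)). -/
open Real

theorem zeta_series_sixteen_log :
    ∑' n : ℕ, zetaR (2 * (n + 1)) / (((n : ℝ) + 1) * 16 ^ (n + 1)) =
      Real.log (π / (2 * Real.sqrt 2)) := by
  -- the small quantities
  set a : ℕ → ℝ := fun j => 1 / (16 * ((j : ℝ) + 1) ^ 2) with ha_def
  have hapos : ∀ j, 0 < a j := by
    intro j
    apply div_pos one_pos
    positivity
  have hale : ∀ j, a j ≤ 1 / 16 := by
    intro j
    rw [ha_def]
    apply div_le_div_of_nonneg_left one_pos.le (by norm_num)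
    nlinarith [sq_nonneg ((j : ℝ)), Nat.cast_nonneg (α := ℝ) j]
  have halt1 : ∀ j, a j < 1 := fun j => lt_of_le_of_lt (hale j) (by norm_num)
  have h1a : ∀ j, 0 < 1 - a j := fun j => by linarith [halt1 j]
  -- log series for each j
  have hlog : ∀ j, HasSum (fun k : ℕ => a j ^ (k + 1) / (k + 1)) (-Real.log (1 - a j)) := by
    intro j
    exact hasSum_pow_div_log_of_abs_lt_one
      (by rw [abs_of_pos (hapos j)]; exact halt1 j)
  -- Step A: Euler product gives the sum of -log(1 - a j)
  have hT := Real.tendsto_euler_sin_prod (1 / 4)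
  have hsin : Real.sin (π * (1 / 4)) = Real.sqrt 2 / 2 := by
    rw [mul_one_div, Real.sin_pi_div_four]
  rw [hsin] at hT
  have hprod_eq : ∀ n : ℕ, π * (1 / 4) * ∏ j ∈ Finset.range n,
      ((1 : ℝ) - (1 / 4) ^ 2 / ((j : ℝ) + 1) ^ 2) =
      π / 4 * ∏ j ∈ Finset.range n, (1 - a j) := by
    intro n
    congr 1
    · ring
    · apply Finset.prod_congr rfl
      intro j _
      rw [ha_def]
      have : ((j : ℝ) + 1) ^ 2 ≠ 0 := by positivity
      field_simp
      ring
  simp_rw [hprod_eq] at hT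
  have hπ4 : (0 : ℝ) < π / 4 := by positivity
  have hPpos : ∀ n : ℕ, 0 < ∏ j ∈ Finset.range n, (1 - a j) := by
    intro n
    exact Finset.prod_pos fun j _ => h1a j
  have hlimpos : (0 : ℝ) < Real.sqrt 2 / 2 := by positivity
  have hTlog : Filter.Tendsto (fun n : ℕ => Real.log (π / 4 * ∏ j ∈ Finset.range n, (1 - a j)))
      Filter.atTop (nhds (Real.log (Real.sqrt 2 / 2))) :=
    (Real.continuousAt_log hlimpos.ne').tendsto.comp hT
  have hlogsum : ∀ n : ℕ, Real.log (π / 4 * ∏ j ∈ Finset.range n, (1 - a j)) =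
      Real.log (π / 4) + ∑ j ∈ Finset.range n, Real.log (1 - a j) := by
    intro n
    rw [Real.log_mul hπ4.ne' (hPpos n).ne', Real.log_prod]
    intro j _
    exact (h1a j).ne'
  simp_rw [hlogsum] at hTlog
  set L : ℝ := Real.log (π / 4) - Real.log (Real.sqrt 2 / 2) with hL
  have hTneg : Filter.Tendsto (fun n : ℕ => ∑ j ∈ Finset.range n, -Real.log (1 - a j))
      Filter.atTop (nhds L) := by
    have := (tendsto_const_nhds (x := Real.log (π / 4)) (f := Filter.atTop (α := ℕ))).sub hTlog
    simp only [Finset.sum_neg_distrib]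
    convert this using 2 with n
    ring
  -- the terms are nonnegative
  have hgnn : ∀ j, 0 ≤ -Real.log (1 - a j) := by
    intro j
    rw [neg_nonneg]
    apply Real.log_nonpos (h1a j).le
    linarith [hapos j]
  have hgsummable : Summable fun j => -Real.log (1 - a j) := by
    apply summable_of_sum_range_le hgnn
    intro n
    have hmono : Monotone fun n : ℕ => ∑ j ∈ Finset.range n, -Real.log (1 - a j) := by
      apply monotone_nat_of_le_succ
      intro n
      rw [Finset.sum_range_succ]
      linarith [hgnn n]
    exact hmono.ge_of_tendsto hTneg n
  have hgsum : HasSum (fun j => -Real.log (1 - a j)) L :=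
    (Summable.hasSum_iff_tendsto_nat hgsummable).mpr hTneg
  -- Step B: interchange
  have hf_nonneg : ∀ (p : ℕ × ℕ), 0 ≤ a p.1 ^ (p.2 + 1) / ((p.2 : ℝ) + 1) := by
    intro p
    positivity
  have hF : Summable fun p : ℕ × ℕ => a p.1 ^ (p.2 + 1) / ((p.2 : ℝ) + 1) := by
    rw [summable_prod_of_nonneg hf_nonneg]
    constructor
    · intro j
      exact (hlog j).summable
    · apply hgsummable.congr
      intro j
      exact ((hlog j).tsum_eq).symm
  have hswap : ∑' (k : ℕ) (j : ℕ), a j ^ (k + 1) / ((k : ℝ) + 1) =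
      ∑' (j : ℕ) (k : ℕ), a j ^ (k + 1) / ((k : ℝ) + 1) :=
    Summable.tsum_comm hF
  -- Step C: inner sums
  have hinner : ∀ k : ℕ, ∑' j : ℕ, a j ^ (k + 1) / ((k : ℝ) + 1) =
      zetaR (2 * (k + 1)) / (((k : ℝ) + 1) * 16 ^ (k + 1)) := by
    intro k
    have hterm : ∀ j : ℕ, a j ^ (k + 1) / ((k : ℝ) + 1) =
        1 / ((j : ℝ) + 1) ^ (2 * (k + 1)) * (1 / (((k : ℝ) + 1) * 16 ^ (k + 1))) := by
      intro j
      have hpow : a j ^ (k + 1) = 1 / (16 ^ (k + 1) * ((j : ℝ) + 1) ^ (2 * (k + 1))) := by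
        rw [ha_def]
        rw [div_pow, one_pow, mul_pow, pow_mul]
      rw [hpow, div_div]
      generalize (16 : ℝ) ^ (k + 1) = X
      generalize ((j : ℝ) + 1) ^ (2 * (k + 1)) = Y
      generalize ((k : ℝ) + 1) = Z
      ring
    simp_rw [hterm]
    rw [tsum_mul_right, zetaR, mul_one_div]
  -- conclude
  calc ∑' n : ℕ, zetaR (2 * (n + 1)) / (((n : ℝ) + 1) * 16 ^ (n + 1))
      = ∑' (k : ℕ) (j : ℕ), a j ^ (k + 1) / ((k : ℝ) + 1) := by
        exact (tsum_congr hinner).symm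
    _ = ∑' (j : ℕ) (k : ℕ), a j ^ (k + 1) / ((k : ℝ) + 1) := hswap
    _ = ∑' j : ℕ, -Real.log (1 - a j) := tsum_congr fun j => (hlog j).tsum_eq
    _ = L := hgsum.tsum_eq
    _ = Real.log (π / (2 * Real.sqrt 2)) := by
        rw [hL, ← Real.log_div hπ4.ne' hlimpos.ne']
        congr 1
        have h2 : Real.sqrt 2 ≠ 0 := by positivity
        field_simp
        ring
end

section
/- For every positive integer k, Σ_{n=1}^{∞} (ζ(2n)/(n·4^n)) · (1 − 1/4^n) · C(2n, 2k) = (ζ(2k)/(2k)) · (1 − 1/4^k), where C(2n, 2k) denotes the binomial coefficient. -/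
open Real

/-!
Since `4⁻ⁿ (1 - 4⁻ⁿ) ζ(2n) = ∑ₘ (4m+2)⁻²ⁿ`, the left-hand side is a double series of nonnegative
terms `C(2n, 2k)/n · (4m+2)⁻²ⁿ`. Summing over `n` first, the generating function
`∑ₙ C(2n, 2k)/n · t²ⁿ = ((t/(1-t))²ᵏ + (t/(1+t))²ᵏ)/(2k)` at `t = 1/(4m+2)` gives
`((4m+1)⁻²ᵏ + (4m+3)⁻²ᵏ)/(2k)`, and summing over `m` yields the sum over all odd numbers,
`(1 - 4⁻ᵏ) ζ(2k)/(2k)`.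
-/

theorem HasSum.even_add_odd_pairs {E : Type*} [NormedAddCommGroup E] [CompleteSpace E]
    {f : ℕ → E} {a : E} (hf : HasSum f a) :
    HasSum (fun k => f (2 * k) + f (2 * k + 1)) a := by
  have he := (hf.summable.comp_injective (mul_right_injective₀ two_ne_zero)).hasSum
  have ho := (hf.summable.comp_injective
    ((add_left_injective 1).comp (mul_right_injective₀ (two_ne_zero' ℕ)))).hasSum
  rw [hf.unique (he.even_add_odd ho)]
  exact he.add ho

theorem HasSum.of_hasSum_rows_of_nonneg {β γ : Type*} {f : β → γ → ℝ} (hf : ∀ b y, 0 ≤ f b y)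
    {r : β → ℝ} {c : γ → ℝ} {S : ℝ} (hS : HasSum r S) (hr : ∀ b, HasSum (f b) (r b))
    (hc : ∀ y, HasSum (fun b => f b y) (c y)) : HasSum c S := by
  have hsum : Summable (Function.uncurry f) :=
    (summable_prod_of_nonneg fun p => hf p.1 p.2).2
      ⟨fun b => (hr b).summable, hS.summable.congr fun b => ((hr b).tsum_eq).symm⟩
  have htotal : HasSum (Function.uncurry f) S :=
    hS.unique (hsum.hasSum.prod_fiberwise hr) ▸ hsum.hasSum
  exact ((Equiv.prodComm γ β).hasSum_iff.2 htotal).prod_fiberwise hc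

theorem hasSum_zetaR_s18 {s : ℕ} (hs : 2 ≤ s) :
    HasSum (fun j : ℕ => 1 / ((j : ℝ) + 1) ^ s) (zetaR s) := by
  refine Summable.hasSum ?_
  simpa using (summable_nat_add_iff 1).2 (summable_one_div_nat_pow.2 hs)

theorem two_pow_two_mul (n : ℕ) : (2 : ℝ) ^ (2 * n) = 4 ^ n := by
  rw [pow_mul]
  norm_num

theorem hasSum_one_div_two_mul_add_one_pow {s : ℕ} (hs : 2 ≤ s) :
    HasSum (fun m : ℕ => 1 / (2 * (m : ℝ) + 1) ^ s) ((1 - 1 / 2 ^ s) * zetaR s) := by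
  have hpairs := (hasSum_zetaR_s18 hs).even_add_odd_pairs
  rw [sub_mul, one_mul]
  refine (hpairs.sub ((hasSum_zetaR_s18 hs).mul_left (1 / 2 ^ s))).congr_fun fun m => ?_
  push_cast
  rw [show 2 * (m : ℝ) + 1 + 1 = 2 * (m + 1) by ring, mul_pow]
  field_simp
  ring

theorem hasSum_one_div_four_mul_add_two_pow {s : ℕ} (hs : 2 ≤ s) :
    HasSum (fun m : ℕ => 1 / (4 * (m : ℝ) + 2) ^ s) (1 / 2 ^ s * ((1 - 1 / 2 ^ s) * zetaR s)) := by
  refine ((hasSum_one_div_two_mul_add_one_pow hs).mul_left (1 / 2 ^ s)).congr_fun fun m => ?_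
  rw [show 4 * (m : ℝ) + 2 = 2 * (2 * m + 1) by ring, mul_pow]
  field_simp

theorem hasSum_odd_pow_pairs {k : ℕ} (hk : 0 < k) :
    HasSum (fun m : ℕ => ((1 / (4 * (m : ℝ) + 1)) ^ (2 * k) + (1 / (4 * (m : ℝ) + 3)) ^ (2 * k)) /
        (2 * k))
      (zetaR (2 * k) / (2 * k) * (1 - 1 / 4 ^ k)) := by
  have h := (hasSum_one_div_two_mul_add_one_pow (s := 2 * k) (by omega)).even_add_odd_pairs
  rw [two_pow_two_mul] at h
  rw [div_mul_eq_mul_div, mul_comm (zetaR _)]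
  refine (h.div_const (2 * k : ℝ)).congr_fun fun m => ?_
  push_cast
  rw [one_div_pow, one_div_pow]
  ring_nf

theorem hasSum_choose_mul_pow {𝕜 : Type*} [NormedField 𝕜] (j : ℕ) {t : 𝕜} (ht : ‖t‖ < 1) :
    HasSum (fun N : ℕ => (N.choose j : 𝕜) * t ^ N) (t ^ j / (1 - t) ^ (j + 1)) := by
  have hlow : ∑ i ∈ Finset.range j, (i.choose j : 𝕜) * t ^ i = 0 :=
    Finset.sum_eq_zero fun i hi => by
      rw [Nat.choose_eq_zero_of_lt (Finset.mem_range.1 hi), Nat.cast_zero, zero_mul]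
  rw [← hasSum_nat_add_iff' j, hlow, sub_zero, div_eq_mul_one_div]
  refine ((hasSum_choose_mul_geometric_of_norm_lt_one j ht).mul_left (t ^ j)).congr_fun
    fun n => ?_
  ring

theorem hasSum_odd_of_hasSum_of_hasSum_neg {c : ℕ → ℝ} {t a b : ℝ}
    (hpos : HasSum (fun N => c N * t ^ N) a) (hneg : HasSum (fun N => c N * (-t) ^ N) b) :
    HasSum (fun n => c (2 * n + 1) * t ^ (2 * n + 1)) ((a - b) / 2) := by
  have hinj : Function.Injective (fun n : ℕ => 2 * n + 1) :=
    (add_left_injective 1).comp (mul_right_injective₀ (two_ne_zero' ℕ))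
  have heven : ∀ N ∉ Set.range (fun n : ℕ => 2 * n + 1), c N * t ^ N - c N * (-t) ^ N = 0 := by
    intro N hN
    have hNeven : Even N := by
      rcases Nat.even_or_odd N with h | ⟨n, rfl⟩
      · exact h
      · exact absurd ⟨n, rfl⟩ hN
    rw [hNeven.neg_pow, sub_self]
  refine (((hinj.hasSum_iff heven).2 (hpos.sub hneg)).div_const 2).congr_fun fun n => ?_
  simp only [Function.comp_apply, (odd_two_mul_add_one n).neg_pow]
  ring

theorem hasSum_choose_two_mul_div_mul_pow {k : ℕ} (hk : 0 < k) {t : ℝ} (ht : |t| < 1) :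
    HasSum (fun n : ℕ => ((2 * (n + 1)).choose (2 * k) : ℝ) / (n + 1) * t ^ (2 * (n + 1)))
      (((t / (1 - t)) ^ (2 * k) + (t / (1 + t)) ^ (2 * k)) / (2 * k)) := by
  obtain ⟨j, rfl⟩ : ∃ j, k = j + 1 := Nat.exists_eq_add_one.2 hk
  -- `C(2n+2, 2j+2)/(n+1) = C(2n+1, 2j+1)/(j+1)`, so the series is `t/(j+1)` times the odd part
  -- of `∑ C(N, 2j+1) tᴺ = t²ʲ⁺¹/(1-t)²ʲ⁺²`.
  have hodd := hasSum_odd_of_hasSum_of_hasSum_neg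
    (hasSum_choose_mul_pow (2 * j + 1) (t := t) (by rwa [Real.norm_eq_abs]))
    (hasSum_choose_mul_pow (2 * j + 1) (t := -t) (by rwa [norm_neg, Real.norm_eq_abs]))
  have h1t : 1 - t ≠ 0 := by linarith [abs_lt.1 ht]
  have h1t' : 1 + t ≠ 0 := by linarith [abs_lt.1 ht]
  have hvalue : ((t / (1 - t)) ^ (2 * (j + 1)) + (t / (1 + t)) ^ (2 * (j + 1))) / (2 * ↑(j + 1)) =
      t / (j + 1) * ((t ^ (2 * j + 1) / (1 - t) ^ (2 * j + 1 + 1) -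
        (-t) ^ (2 * j + 1) / (1 - -t) ^ (2 * j + 1 + 1)) / 2) := by
    rw [show 2 * (j + 1) = 2 * j + 1 + 1 by ring, sub_neg_eq_add, (odd_two_mul_add_one j).neg_pow,
      div_pow, div_pow, pow_succ t (2 * j + 1)]
    push_cast
    field_simp
    ring
  rw [hvalue]
  refine (hodd.mul_left (t / (j + 1))).congr_fun fun n => ?_
  have hchoose : ((2 * n + 2 : ℕ) : ℝ) * ((2 * n + 1).choose (2 * j + 1) : ℝ) =
      ((2 * n + 2).choose (2 * j + 2) : ℝ) * ((2 * j + 2 : ℕ) : ℝ) := by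
    exact_mod_cast Nat.add_one_mul_choose_eq (2 * n + 1) (2 * j + 1)
  push_cast at hchoose ⊢
  rw [show 2 * (n + 1) = 2 * n + 2 by ring, show 2 * (j + 1) = 2 * j + 2 by ring,
    pow_succ t (2 * n + 1)]
  field_simp
  linear_combination -(t ^ (2 * n + 1) * t / 2) * hchoose

noncomputable def binomZetaTerm (k m n : ℕ) : ℝ :=
  ((2 * (n + 1)).choose (2 * k) : ℝ) / (n + 1) * (1 / (4 * (m : ℝ) + 2)) ^ (2 * (n + 1))

theorem binomZetaTerm_nonneg (k m n : ℕ) : 0 ≤ binomZetaTerm k m n := by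
  unfold binomZetaTerm
  positivity

theorem hasSum_binomZetaTerm_row {k : ℕ} (hk : 0 < k) (m : ℕ) :
    HasSum (binomZetaTerm k m)
      (((1 / (4 * (m : ℝ) + 1)) ^ (2 * k) + (1 / (4 * (m : ℝ) + 3)) ^ (2 * k)) / (2 * k)) := by
  have ht : |1 / (4 * (m : ℝ) + 2)| < 1 := by
    rw [abs_of_pos (by positivity), div_lt_one (by positivity)]
    linarith [(m.cast_nonneg : (0 : ℝ) ≤ m)]
  have h := hasSum_choose_two_mul_div_mul_pow hk ht
  have hx : 4 * (m : ℝ) + 2 ≠ 0 := by positivity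
  have hminus : 1 / (4 * (m : ℝ) + 2) / (1 - 1 / (4 * (m : ℝ) + 2)) = 1 / (4 * m + 1) := by
    rw [one_sub_div hx, div_div_div_cancel_right₀ hx]
    ring
  have hplus : 1 / (4 * (m : ℝ) + 2) / (1 + 1 / (4 * (m : ℝ) + 2)) = 1 / (4 * m + 3) := by
    rw [one_add_div hx, div_div_div_cancel_right₀ hx]
    ring
  rwa [hminus, hplus] at h

theorem hasSum_binomZetaTerm_column (k n : ℕ) :
    HasSum (fun m => binomZetaTerm k m n)
      (zetaR (2 * (n + 1)) / (((n : ℝ) + 1) * 4 ^ (n + 1)) * (1 - 1 / 4 ^ (n + 1)) *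
        ((2 * (n + 1)).choose (2 * k) : ℝ)) := by
  have h := (hasSum_one_div_four_mul_add_two_pow (s := 2 * (n + 1)) (by omega)).mul_left
    (((2 * (n + 1)).choose (2 * k) : ℝ) / (n + 1))
  rw [two_pow_two_mul] at h
  have hvalue : zetaR (2 * (n + 1)) / (((n : ℝ) + 1) * 4 ^ (n + 1)) * (1 - 1 / 4 ^ (n + 1)) *
      ((2 * (n + 1)).choose (2 * k) : ℝ) = ((2 * (n + 1)).choose (2 * k) : ℝ) / (n + 1) *
      (1 / 4 ^ (n + 1) * ((1 - 1 / 4 ^ (n + 1)) * zetaR (2 * (n + 1)))) := by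
    field_simp
  rw [hvalue]
  exact h.congr_fun fun m => by rw [binomZetaTerm, one_div_pow]

theorem zeta_binom_diff_even (k : ℕ) (hk : 0 < k) :
    ∑' n : ℕ, zetaR (2 * (n + 1)) / (((n : ℝ) + 1) * 4 ^ (n + 1)) *
      (1 - 1 / 4 ^ (n + 1)) * (Nat.choose (2 * (n + 1)) (2 * k) : ℝ) =
      (zetaR (2 * k) / (2 * (k : ℝ))) * (1 - 1 / 4 ^ k) :=
  (HasSum.of_hasSum_rows_of_nonneg (binomZetaTerm_nonneg k) (hasSum_odd_pow_pairs hk)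
    (hasSum_binomZetaTerm_row hk) (hasSum_binomZetaTerm_column k)).tsum_eq
end
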